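/- arXiv:2204.01898 — 2 statements merged into one kernel-verified Lean document; each statement's English description precedes it below -/
import Mathlib

section
/- Let C be a definable, closed and bounded subset of M^m and let s > 0. Then every pointwise convergent definable family of equi-continuous functions {f_t : C → M}_{0<t<s} is uniformly convergent. -/
open Set

/-- The projection of `M^{m+n}` onto the first `m` coordinates. -/
def pFst {M : Type*} {m n : ℕ} (z : Fin (m + n) → M) : Fin m → M :=
  fun i => z (Fin.castAdd n i)

/-- The projection of `M^{m+n}` onto the last `n` coordinates. -/
def pSnd {M : Type*} {m n : ℕ} (z : Fin (m + n) → M) : Fin n → M :=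
  fun j => z (Fin.natAdd m j)

/-- The family of sets definable with parameters in an expansion `𝓜 = (M,<,…)` of a
linear order: a van den Dries-style structure on `M` containing the graph of `<`. -/
structure OrdStruc (M : Type*) [LinearOrder M] where
  defin : ∀ {n : ℕ}, Set (Fin n → M) → Prop
  defin_union : ∀ {n : ℕ} {A B : Set (Fin n → M)}, defin A → defin B → defin (A ∪ B)
  defin_compl : ∀ {n : ℕ} {A : Set (Fin n → M)}, defin A → defin Aᶜ
  defin_empty : ∀ {n : ℕ}, defin (∅ : Set (Fin n → M))
  defin_cylinder : ∀ {n : ℕ} {A : Set (Fin n → M)}, defin A →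
    defin {z : Fin (n + 1) → M | Fin.init z ∈ A}
  defin_proj : ∀ {n : ℕ} {A : Set (Fin (n + 1) → M)}, defin A →
    defin ((fun z : Fin (n + 1) → M => Fin.init z) '' A)
  defin_perm : ∀ {n : ℕ} (σ : Equiv.Perm (Fin n)) {A : Set (Fin n → M)}, defin A →
    defin {z : Fin n → M | z ∘ σ ∈ A}
  defin_lt : defin {z : Fin 2 → M | z 0 < z 1}
  defin_eq : defin {z : Fin 2 → M | z 0 = z 1}
  defin_const : ∀ a : M, defin {z : Fin 1 → M | z 0 = a}

/-- The definable sets of an expansion `𝓜 = (M,<,0,+,…)` of an ordered abelian group. -/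
structure GrpStruc (M : Type*) [AddCommGroup M] [LinearOrder M] [IsOrderedAddMonoid M] extends OrdStruc M where
  defin_add : defin {z : Fin 3 → M | z 0 + z 1 = z 2}

/-- The definable sets of an expansion `𝓕 = (F,<,+,0,·,1,…)` of an ordered field. -/
structure FieldStruc (M : Type*) [Field M] [LinearOrder M] [IsStrictOrderedRing M] extends GrpStruc M where
  defin_mul : defin {z : Fin 3 → M | z 0 * z 1 = z 2}

namespace OrdStruc

variable {M : Type*} [LinearOrder M]

/-- A subset of `M` is definable. -/
def defin1 (S : OrdStruc M) (A : Set M) : Prop :=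
  S.defin {z : Fin 1 → M | z 0 ∈ A}

/-- The function `f : C → M`, `C ⊆ M^m`, is definable: its graph over `C` is definable. -/
def DefinableFunOn (S : OrdStruc M) {m : ℕ} (C : Set (Fin m → M))
    (f : (Fin m → M) → M) : Prop :=
  S.defin {z : Fin (m + 1) → M | Fin.init z ∈ C ∧ z (Fin.last m) = f (Fin.init z)}

/-- The map `f : C → M^k`, `C ⊆ M^m`, is definable: its graph over `C` is definable. -/
def DefinableMapOn (S : OrdStruc M) {m k : ℕ} (C : Set (Fin m → M))
    (f : (Fin m → M) → Fin k → M) : Prop :=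
  S.defin {z : Fin (m + k) → M | pFst z ∈ C ∧ pSnd z = f (pFst z)}

/-- The two-variable function `f : C × P → M` is definable. -/
def DefinableFun2On (S : OrdStruc M) {m n : ℕ} (C : Set (Fin m → M))
    (P : Set (Fin n → M)) (f : (Fin m → M) → (Fin n → M) → M) : Prop :=
  S.defin {z : Fin (m + n + 1) → M |
    pFst (Fin.init z) ∈ C ∧ pSnd (Fin.init z) ∈ P ∧
    z (Fin.last (m + n)) = f (pFst (Fin.init z)) (pSnd (Fin.init z))}

/-- A definable family of functions `{f_t : C → M}_{t ∈ I}` given by `F(x,t) = f_t(x)`. -/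
def DefinableFamilyOn (S : OrdStruc M) {m : ℕ} (C : Set (Fin m → M)) (I : Set M)
    (F : (Fin m → M) → M → M) : Prop :=
  S.defin {z : Fin (m + 1 + 1) → M |
    Fin.init (Fin.init z) ∈ C ∧ Fin.init z (Fin.last m) ∈ I ∧
    z (Fin.last (m + 1)) = F (Fin.init (Fin.init z)) (Fin.init z (Fin.last m))}

end OrdStruc

/-- `𝓜` is definably complete: every definable subset of `M` has a supremum and an
infimum in `M ∪ {±∞}`. -/
def DefinablyComplete {M : Type*} [LinearOrder M] (S : OrdStruc M) : Prop :=
  ∀ A : Set M, S.defin1 A → A.Nonempty →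
    (BddAbove A → ∃ a, IsLUB A a) ∧ (BddBelow A → ∃ a, IsGLB A a)

/-- `𝓜` is locally o-minimal: for every definable `A ⊆ M` and every `a ∈ M` there is an
open interval `I ∋ a` such that `A ∩ I` is a finite union of points and open intervals. -/
def LocallyOMinimal {M : Type*} [LinearOrder M] (S : OrdStruc M) : Prop :=
  ∀ A : Set M, S.defin1 A → ∀ a : M, ∃ b c : M, b < a ∧ a < c ∧
    ∃ (s : Finset M) (t : Finset (M × M)),
      A ∩ Set.Ioo b c = (↑s : Set M) ∪ ⋃ p ∈ t, Set.Ioo p.1 p.2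

/-- Open intervals of `M` (with possibly infinite endpoints). -/
def IsOpenInterval {M : Type*} [LinearOrder M] (I : Set M) : Prop :=
  (∃ a b : M, I = Set.Ioo a b) ∨ (∃ a : M, I = Set.Ioi a) ∨
    (∃ b : M, I = Set.Iio b) ∨ I = Set.univ

/-- Open boxes in `M^n`: products of `n` open intervals. -/
def IsOpenBox {M : Type*} [LinearOrder M] {n : ℕ} (B : Set (Fin n → M)) : Prop :=
  ∃ I : Fin n → Set M, (∀ i, IsOpenInterval (I i)) ∧ B = Set.pi Set.univ I

/-- Some coordinate projection of `X ⊆ M^n` onto `M^d` has an image with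
nonempty interior. -/
def HasDimAtLeast {M : Type*} [TopologicalSpace M] {n : ℕ}
    (X : Set (Fin n → M)) (d : ℕ) : Prop :=
  ∃ ι : Fin d → Fin n, Function.Injective ι ∧
    (interior ((fun x : Fin n → M => x ∘ ι) '' X)).Nonempty

open Classical in
/-- The dimension of a subset of `M^n`: the largest `d` such that some coordinate
projection onto `M^d` has an image with nonempty interior; `⊥` (i.e. `-∞`) for `∅`. -/
noncomputable def sdim {M : Type*} [TopologicalSpace M] {n : ℕ}
    (X : Set (Fin n → M)) : WithBot ℕ :=
  if X.Nonempty then (Nat.findGreatest (HasDimAtLeast X) n : WithBot ℕ) else ⊥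

/-- `|x| = max_{1 ≤ i ≤ n} |x_i|`. -/
def vnorm {M : Type*} [AddCommGroup M] [LinearOrder M] [IsOrderedAddMonoid M] {n : ℕ} (x : Fin n → M) : M :=
  (List.ofFn fun i => |x i|).foldr max 0

/-- A subset of `M^n` is bounded. -/
def VBdd {M : Type*} [AddCommGroup M] [LinearOrder M] [IsOrderedAddMonoid M] {n : ℕ} (A : Set (Fin n → M)) : Prop :=
  ∃ r : M, ∀ x ∈ A, vnorm x < r

/-- The box `𝓑_n(x, ε) = {y : |x_i - y_i| < ε for all i}`. -/
def vball {M : Type*} [AddCommGroup M] [LinearOrder M] [IsOrderedAddMonoid M] {n : ℕ} (x : Fin n → M) (ε : M) :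
    Set (Fin n → M) :=
  {y | ∀ i, |x i - y i| < ε}

/-- `fib(X, π, x) = {y ∈ M^e : (x,y) ∈ X}`, where `π : M^{d+e} → M^d` is the
projection onto the first `d` coordinates. -/
def fibAt {M : Type*} {d e : ℕ} (X : Set (Fin (d + e) → M)) (x : Fin d → M) :
    Set (Fin e → M) :=
  {y | Fin.append x y ∈ X}

/-- `X ⊆ M^{d+e}` is a `π`-special submanifold, `π` the projection onto the first `d`
coordinates: for every `x ∈ M^d` there are an open box `U ∋ x` and mutually disjoint
open boxes `V_y` (`y ∈ fib(X,π,x)`) with `π(V_y) = U`, covering `X ∩ π⁻¹(U)` and such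
that each `V_y ∩ X` is the graph of a continuous map on `U`. -/
def SpecialFirst {M : Type*} [LinearOrder M] [TopologicalSpace M] {d e : ℕ}
    (X : Set (Fin (d + e) → M)) : Prop :=
  ∀ x : Fin d → M, ∃ U : Set (Fin d → M), IsOpenBox U ∧ x ∈ U ∧
    ∃ V : (Fin e → M) → Set (Fin (d + e) → M),
      (∀ y ∈ fibAt X x, IsOpenBox (V y)) ∧
      (∀ y ∈ fibAt X x, ∀ y' ∈ fibAt X x, y ≠ y' → V y ∩ V y' = ∅) ∧
      (∀ y ∈ fibAt X x, pFst '' V y = U) ∧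
      (∀ z ∈ X, pFst z ∈ U → ∃ y ∈ fibAt X x, z ∈ V y) ∧
      (∀ y ∈ fibAt X x, ∃ g : (Fin d → M) → Fin e → M,
        ContinuousOn g U ∧ V y ∩ X = (fun u => Fin.append u (g u)) '' U)

/-- `X ⊆ M^{d+e}` is a `π`-quasi-special submanifold: like `SpecialFirst` but only for
`x ∈ π(X)` and without the covering condition (2). -/
def QuasiSpecialFirst {M : Type*} [LinearOrder M] [TopologicalSpace M] {d e : ℕ}
    (X : Set (Fin (d + e) → M)) : Prop :=
  ∀ x ∈ pFst '' X, ∃ U : Set (Fin d → M), IsOpenBox U ∧ x ∈ U ∧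
    ∃ V : (Fin e → M) → Set (Fin (d + e) → M),
      (∀ y ∈ fibAt X x, IsOpenBox (V y)) ∧
      (∀ y ∈ fibAt X x, ∀ y' ∈ fibAt X x, y ≠ y' → V y ∩ V y' = ∅) ∧
      (∀ y ∈ fibAt X x, pFst '' V y = U) ∧
      (∀ y ∈ fibAt X x, ∃ g : (Fin d → M) → Fin e → M,
        ContinuousOn g U ∧ V y ∩ X = (fun u => Fin.append u (g u)) '' U)

/-- `C ⊆ M^n` is a special submanifold: it is a `π`-special submanifold for some
coordinate projection `π : M^n → M^d` (obtained by permuting coordinates and then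
projecting onto the first `d` coordinates). -/
def IsSpecial {M : Type*} [LinearOrder M] [TopologicalSpace M] {n : ℕ}
    (C : Set (Fin n → M)) : Prop :=
  ∃ (d e : ℕ) (σ : Fin n ≃ Fin (d + e)),
    SpecialFirst {z : Fin (d + e) → M | z ∘ σ ∈ C}

/-- `(X, π)` is locally bounded at `x ∈ π(X)`. -/
def LocBddAt {M : Type*} [AddCommGroup M] [LinearOrder M] [IsOrderedAddMonoid M] {d e : ℕ}
    (X : Set (Fin (d + e) → M)) (x : Fin d → M) : Prop :=
  ∃ U : Set (Fin d → M), IsOpenBox U ∧ VBdd U ∧ x ∈ U ∧ VBdd {z ∈ X | pFst z ∈ U}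

/-- `(X, π, T, η, ρ)` is a special submanifold with a tubular neighborhood (the data
`T`, `η`, `ρ` over the special submanifold `X`), `π` projection onto first `d` coords. -/
def TubularFirst {M : Type*} [AddCommGroup M] [LinearOrder M] [IsOrderedAddMonoid M] [TopologicalSpace M] {d e : ℕ}
    (S : GrpStruc M) (X T : Set (Fin (d + e) → M))
    (η : (Fin d → M) → M) (ρ : (Fin (d + e) → M) → Fin (d + e) → M) : Prop :=
  (sdim X = ((d + e : ℕ) : WithBot ℕ) ∧ IsOpen X ∧ T = X ∧ (∀ u, η u = 0) ∧
    ∀ z ∈ X, ρ z = z) ∨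
  (sdim X < ((d + e : ℕ) : WithBot ℕ) ∧
    -- (a)
    S.defin T ∧ IsOpen T ∧ T ⊆ {z | pFst z ∈ pFst '' X} ∧
    -- (b)
    S.toOrdStruc.DefinableFunOn (pFst '' X) η ∧ ContinuousOn η (pFst '' X) ∧
    (∀ u ∈ pFst '' X, 0 < η u) ∧ (∃ r : M, ∀ u ∈ pFst '' X, η u < r) ∧
    (∀ u ∈ pFst '' X, fibAt T u = ⋃ x ∈ fibAt X u, vball x (η u)) ∧
    (∀ u ∈ pFst '' X, ∀ x₁ ∈ fibAt X u, ∀ x₂ ∈ fibAt X u, x₁ ≠ x₂ →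
      vball x₁ (η u) ∩ vball x₂ (η u) = ∅) ∧
    -- (c)
    S.toOrdStruc.DefinableMapOn T ρ ∧ ContinuousOn ρ T ∧
    (∀ z ∈ T, ρ z ∈ X) ∧ (∀ z ∈ X, ρ z = z) ∧
    (∀ u : Fin d → M, ρ '' {z ∈ T | pFst z = u} ⊆ {z ∈ X | pFst z = u}) ∧
    (∀ u ∈ pFst '' X, ∀ x ∈ fibAt X u, ∀ y ∈ vball x (η u),
      ρ (Fin.append u y) = Fin.append u x))

/-!
If the convergence is not uniform, then for some `ε > 0` the sets `E_r` of points `x ∈ C` at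
which `t ↦ f_t(x)` oscillates by at least `ε` on `(0, r)` form a definable, bounded family of
nonempty sets increasing in `r`. Definable completeness gives a point `x₀` that every `E_r`
approaches: its first coordinate is the supremum `b` of the lower bounds of the first
coordinates of the `E_r`, and the tails of the points of `E_r` whose first coordinate is
`r`-close to `b` form a family of the same kind in one dimension less. As `C` is closed,
`x₀ ∈ C`, and equicontinuity together with pointwise convergence at `x₀` bound the oscillation
near `x₀` by `ε`, a contradiction.
-/

namespace OrdStruc

variable {M : Type*} [LinearOrder M]

def DefinablePred (S : OrdStruc M) {n : ℕ} (P : (Fin n → M) → Prop) : Prop :=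
  S.defin {z | P z}

namespace DefinablePred

variable {S : OrdStruc M} {n k : ℕ} {P Q : (Fin n → M) → Prop}

theorem of_iff (hP : S.DefinablePred P) (h : ∀ z, P z ↔ Q z) : S.DefinablePred Q := by
  rwa [DefinablePred, ← Set.ext h]

theorem not (hP : S.DefinablePred P) : S.DefinablePred fun z => ¬ P z :=
  S.defin_compl hP

theorem or (hP : S.DefinablePred P) (hQ : S.DefinablePred Q) :
    S.DefinablePred fun z => P z ∨ Q z :=
  S.defin_union hP hQ

theorem and (hP : S.DefinablePred P) (hQ : S.DefinablePred Q) :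
    S.DefinablePred fun z => P z ∧ Q z :=
  (hP.not.or hQ.not).not.of_iff fun _ => by simp only [not_or, not_not]

theorem imp (hP : S.DefinablePred P) (hQ : S.DefinablePred Q) :
    S.DefinablePred fun z => P z → Q z :=
  (hP.not.or hQ).of_iff fun _ => imp_iff_not_or.symm

theorem forall_fin {Q : Fin k → (Fin n → M) → Prop} (hQ : ∀ i, S.DefinablePred (Q i)) :
    S.DefinablePred fun z => ∀ i, Q i z := by
  induction k with
  | zero => exact DefinablePred.of_iff (S.defin_compl S.defin_empty) fun _ => by simp
  | succ k ih =>
    exact ((hQ 0).and (ih fun i => hQ i.succ)).of_iff fun _ =>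
      (Fin.forall_fin_succ (P := (Q · _))).symm

theorem exists_snoc {P : (Fin (n + 1) → M) → Prop} (hP : S.DefinablePred P) :
    S.DefinablePred fun z => ∃ y, P (Fin.snoc z y) := by
  refine DefinablePred.of_iff (S.defin_proj hP) fun z => ⟨?_, ?_⟩
  · rintro ⟨w, hw, rfl⟩
    exact ⟨w (Fin.last n), by rwa [Fin.snoc_init_self]⟩
  · rintro ⟨y, hy⟩
    exact ⟨_, hy, Fin.init_snoc _ _⟩

theorem forall_snoc {P : (Fin (n + 1) → M) → Prop} (hP : S.DefinablePred P) :
    S.DefinablePred fun z => ∀ y, P (Fin.snoc z y) :=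
  hP.not.exists_snoc.not.of_iff fun _ => not_exists_not

theorem exists_append {P : (Fin (n + k) → M) → Prop} (hP : S.DefinablePred P) :
    S.DefinablePred fun z => ∃ y : Fin k → M, P (Fin.append z y) := by
  induction k with
  | zero =>
    refine hP.of_iff fun z => ⟨fun h => ⟨Fin.elim0, ?_⟩, fun ⟨y, hy⟩ => ?_⟩
    · simpa [Fin.append_right_nil]
    · simpa [Fin.append_right_nil] using hy
  | succ k ih =>
    refine (ih hP.exists_snoc).of_iff fun z =>
      ⟨fun ⟨y, a, h⟩ => ⟨Fin.snoc y a, ?_⟩, fun ⟨y, h⟩ => ?_⟩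
    · rwa [Fin.append_snoc]
    · exact ⟨Fin.init y, y (Fin.last k), by rwa [← Fin.append_snoc, Fin.snoc_init_self]⟩

theorem forall_append {P : (Fin (n + k) → M) → Prop} (hP : S.DefinablePred P) :
    S.DefinablePred fun z => ∀ y : Fin k → M, P (Fin.append z y) :=
  hP.not.exists_append.not.of_iff fun _ => not_exists_not

theorem comp_castAdd (j : ℕ) (hP : S.DefinablePred P) :
    S.DefinablePred fun z : Fin (n + j) → M => P (z ∘ Fin.castAdd j) := by
  induction j with
  | zero => exact hP
  | succ j ih => exact S.defin_cylinder ih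

theorem comp_of_injective {f : Fin n → Fin k} (hf : f.Injective) (hP : S.DefinablePred P) :
    S.DefinablePred fun z => P (z ∘ f) := by
  obtain ⟨j, rfl⟩ := Nat.exists_eq_add_of_le (by simpa using Fintype.card_le_of_injective f hf)
  obtain ⟨σ, hσ⟩ := Equiv.Perm.exists_extending_pair _ f (Fin.castAdd_injective n j) hf
  refine DefinablePred.of_iff (S.defin_perm σ (hP.comp_castAdd j)) fun z => ?_
  change P (z ∘ σ ∘ Fin.castAdd j) ↔ _
  rw [show ⇑σ ∘ Fin.castAdd j = f from funext hσ]

theorem eq_of_ne {i j : Fin n} (h : i ≠ j) : S.DefinablePred fun z => z i = z j := by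
  have hij : Function.Injective ![i, j] :=
    Fin.cons_injective_iff.2 ⟨by simpa using h, Function.injective_of_subsingleton _⟩
  exact (comp_of_injective hij S.defin_eq).of_iff fun z => by simp

theorem comp {P : (Fin k → M) → Prop} (g : Fin k → Fin n) (hP : S.DefinablePred P) :
    S.DefinablePred fun z => P (z ∘ g) := by
  -- `P (z ∘ g)` holds iff some `y` with `y = z ∘ g` satisfies `P`
  have hgraph : S.DefinablePred fun w : Fin (n + k) → M =>
      ∀ i, w (Fin.natAdd n i) = w (Fin.castAdd k (g i)) :=
    forall_fin fun i => eq_of_ne fun h => by have := (g i).2; simp [Fin.ext_iff] at h; omega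
  have happend (z : Fin n → M) (y : Fin k → M) : Fin.append z y ∘ Fin.natAdd n = y :=
    funext (Fin.append_right z y)
  refine (hgraph.and (hP.comp_of_injective (Fin.natAdd_injective k n))).exists_append.of_iff
    fun z => ⟨fun ⟨y, hy, h⟩ => ?_, fun h => ⟨z ∘ g, by simp, by rwa [happend]⟩⟩
  rwa [happend, show y = z ∘ g from funext fun i => by simpa using hy i] at h

theorem lt (i j : Fin n) : S.DefinablePred fun z => z i < z j :=
  (comp ![i, j] S.defin_lt).of_iff fun z => by simp

theorem le (i j : Fin n) : S.DefinablePred fun z => z i ≤ z j :=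
  (lt j i).not.of_iff fun _ => not_lt

theorem snoc_const {P : (Fin (n + 1) → M) → Prop} (hP : S.DefinablePred P) (c : M) :
    S.DefinablePred fun z => P (Fin.snoc z c) :=
  ((comp ![Fin.last n] (S.defin_const c)).and hP).exists_snoc.of_iff fun z => by simp

end DefinablePred

def DefinableSetFamily (S : OrdStruc M) {n : ℕ} (E : (Fin n → M) → M → Prop) : Prop :=
  S.DefinablePred fun z : Fin (n + 1) → M => E (Fin.init z) (z (Fin.last n))

end OrdStruc

namespace OrdStruc.DefinablePred

variable {M : Type*} [AddCommGroup M] [LinearOrder M] [IsOrderedAddMonoid M] {S : GrpStruc M}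
  {n : ℕ}

theorem lt_add (i j k : Fin n) : S.DefinablePred fun z => z i < z j + z k :=
  ((comp ![j.castSucc, k.castSucc, Fin.last n] S.defin_add).and
    (lt i.castSucc (Fin.last n))).exists_snoc.of_iff fun z => by simp

end OrdStruc.DefinablePred

section LowerBounds

variable {M : Type*} [LinearOrder M] [Zero M] {n : ℕ}

def headLowerBounds (E : (Fin (n + 1) → M) → M → Prop) : Set M :=
  {u | ∃ r > 0, ∀ v y, E (Fin.cons v y) r → u ≤ v}

open OrdStruc.DefinablePred in
theorem definable_headLowerBounds {S : OrdStruc M} {E : (Fin (n + 1) → M) → M → Prop}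
    (hE : S.DefinableSetFamily E) : S.defin1 (headLowerBounds E) := by
  -- coordinates: u, r, v, then the tail y
  have hbound := (hE.comp (Fin.snoc (Fin.cons (Fin.castAdd n (Fin.last 2)) (Fin.natAdd 3))
    (Fin.castAdd n (Fin.last 1).castSucc))).imp
    (le (Fin.castAdd n (0 : Fin 1).castSucc.castSucc) (Fin.castAdd n (Fin.last 2)))
  refine ((lt (Fin.last 2) (Fin.last 1).castSucc).snoc_const 0 |>.and
    hbound.forall_append.forall_snoc).exists_snoc.of_iff fun z => ?_
  simp only [Fin.comp_snoc, Fin.comp_cons]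
  simp only [headLowerBounds, Set.mem_ofPred_eq, Fin.init_snoc,
    Fin.snoc_last, Fin.snoc_castSucc, Fin.append_left, Function.comp_def, Fin.append_right]

end LowerBounds

section Families

variable {M : Type*} [AddCommGroup M] [LinearOrder M] {n : ℕ}

def IsAdherentAtZero (E : (Fin n → M) → M → Prop) (x₀ : Fin n → M) : Prop :=
  ∀ r > 0, ∀ δ > 0, ∃ x, E x r ∧ ∀ i, |x₀ i - x i| < δ

def tailFamily (E : (Fin (n + 1) → M) → M → Prop) (b : M) : (Fin n → M) → M → Prop :=
  fun y q => ∃ r v, 0 < r ∧ r ≤ q ∧ E (Fin.cons v y) r ∧ |v - b| < q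

section

variable {E : (Fin (n + 1) → M) → M → Prop} {b R : M}

theorem tailFamily_mono (y : Fin n → M) : Monotone (tailFamily E b y) :=
  fun _ _ hqq' ⟨r, v, hr, hrq, hE, hv⟩ => ⟨r, v, hr, hrq.trans hqq', hE, hv.trans_le hqq'⟩

theorem abs_lt_of_tailFamily (hbdd : ∀ x r, E x r → ∀ i, |x i| < R) {y : Fin n → M} {q : M}
    (h : tailFamily E b y q) (i : Fin n) : |y i| < R := by
  obtain ⟨r, v, -, -, hE, -⟩ := h
  simpa using hbdd _ _ hE i.succ

theorem IsAdherentAtZero.cons_of_tailFamily (hmono : ∀ x, Monotone (E x))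
    {y₀ : Fin n → M} (hy₀ : IsAdherentAtZero (tailFamily E b) y₀) :
    IsAdherentAtZero E (Fin.cons b y₀) := by
  intro r hr δ hδ
  obtain ⟨y, ⟨r', v, -, hr'q, hE, hv⟩, hy⟩ := hy₀ (min r δ) (lt_min hr hδ) δ hδ
  refine ⟨Fin.cons v y, hmono _ (hr'q.trans (min_le_left r δ)) hE, Fin.cases ?_ hy⟩
  simpa [abs_sub_comm] using hv.trans_le (min_le_right r δ)

end

def oscillationFamily (C : Set (Fin n → M)) (F : (Fin n → M) → M → M) (s ε : M) :
    (Fin n → M) → M → Prop :=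
  fun x r => ∃ t t', t < r ∧ t' < r ∧ x ∈ C ∧ t ∈ Set.Ioo 0 s ∧ t' ∈ Set.Ioo 0 s ∧
    ε ≤ |F x t - F x t'|

theorem oscillationFamily_mono (C : Set (Fin n → M)) (F : (Fin n → M) → M → M) (s ε : M)
    (x : Fin n → M) : Monotone (oscillationFamily C F s ε x) :=
  fun _ _ hrr' ⟨t, t', ht, ht', hosc⟩ => ⟨t, t', ht.trans_le hrr', ht'.trans_le hrr', hosc⟩

end Families

section Definability

variable {M : Type*} [AddCommGroup M] [LinearOrder M] [IsOrderedAddMonoid M] {n : ℕ}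

open OrdStruc.DefinablePred in
theorem definable_tailFamily {S : GrpStruc M} {E : (Fin (n + 1) → M) → M → Prop}
    (hE : S.DefinableSetFamily E) (b : M) : S.DefinableSetFamily (tailFamily E b) := by
  -- coordinates: y, q, r, v, then the constant 0 or b
  have hmem := hE.comp (Fin.snoc (Fin.cons (Fin.last (n + 2))
    (Fin.castSucc ∘ Fin.castSucc ∘ Fin.castSucc)) (Fin.last (n + 1)).castSucc)
  have hpos := (lt (S := S.toOrdStruc) (Fin.last (n + 3))
    (Fin.last (n + 1)).castSucc.castSucc).snoc_const (0 : M)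
  have hle := le (S := S.toOrdStruc) (Fin.last (n + 1)).castSucc (Fin.last n).castSucc.castSucc
  have hclose := ((lt_add (S := S) (Fin.last (n + 2)).castSucc
    (Fin.last n).castSucc.castSucc.castSucc (Fin.last (n + 3))).snoc_const b).and
    ((lt_add (S := S) (Fin.last (n + 3)) (Fin.last n).castSucc.castSucc.castSucc
    (Fin.last (n + 2)).castSucc).snoc_const b)
  refine (hpos.and (hle.and (hmem.and hclose))).exists_snoc.exists_snoc.of_iff fun z => ?_
  simp only [Fin.comp_snoc, Fin.comp_cons, ← Function.comp_assoc, Fin.snoc_comp_castSucc]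
  simp only [tailFamily, Fin.init_snoc, Fin.snoc_last, Fin.snoc_castSucc, abs_sub_lt_iff,
    sub_lt_iff_lt_add]
  rfl

open OrdStruc.DefinablePred in
theorem definable_oscillationFamily {S : GrpStruc M} {C : Set (Fin n → M)} {s : M}
    {F : (Fin n → M) → M → M} (hF : S.DefinableFamilyOn C (Set.Ioo 0 s) F) (ε : M) :
    S.DefinableSetFamily (oscillationFamily C F s ε) := by
  have hgraph := show S.toOrdStruc.DefinablePred _ from hF
  -- coordinates: x, r, t, t', v = F x t, v' = F x t'
  have hvalue := hgraph.comp (Fin.snoc (Fin.snoc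
    (Fin.castSucc ∘ Fin.castSucc ∘ Fin.castSucc ∘ Fin.castSucc ∘ Fin.castSucc)
    (Fin.last (n + 1)).castSucc.castSucc.castSucc) (Fin.last (n + 3)).castSucc)
  have hvalue' := hgraph.comp (Fin.snoc (Fin.snoc
    (Fin.castSucc ∘ Fin.castSucc ∘ Fin.castSucc ∘ Fin.castSucc ∘ Fin.castSucc)
    (Fin.last (n + 2)).castSucc.castSucc) (Fin.last (n + 4)))
  have hgap := (((lt_add (S := S) (Fin.last (n + 3)).castSucc.castSucc (Fin.last (n + 5))
    (Fin.last (n + 4)).castSucc).and (lt_add (S := S) (Fin.last (n + 4)).castSucc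
    (Fin.last (n + 5)) (Fin.last (n + 3)).castSucc.castSucc)).snoc_const ε).not
  have htr := (lt (S := S.toOrdStruc) (Fin.last (n + 1)).castSucc.castSucc.castSucc
    (Fin.last n).castSucc.castSucc.castSucc.castSucc).and
    (lt (S := S.toOrdStruc) (Fin.last (n + 2)).castSucc.castSucc
    (Fin.last n).castSucc.castSucc.castSucc.castSucc)
  refine (htr.and (hvalue.and (hvalue'.and hgap))).exists_snoc.exists_snoc.exists_snoc.exists_snoc
    |>.of_iff fun z => ?_
  simp only [Fin.comp_snoc, ← Function.comp_assoc, Fin.snoc_comp_castSucc]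
  simp only [oscillationFamily, Fin.init_snoc, Fin.snoc_last, Fin.snoc_castSucc, ← not_lt,
    abs_sub_lt_iff, sub_lt_iff_lt_add]
  refine exists₂_congr fun t t' => ⟨?_, ?_⟩
  · rintro ⟨v, v', ⟨hrt, hrt'⟩, ⟨hx, ht, rfl⟩, ⟨-, ht', rfl⟩, hgap⟩
    exact ⟨hrt, hrt', hx, ht, ht', hgap⟩
  · rintro ⟨hrt, hrt', hx, ht, ht', hgap⟩
    exact ⟨_, _, ⟨hrt, hrt'⟩, ⟨hx, ht, rfl⟩, ⟨hx, ht', rfl⟩, hgap⟩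

end Definability

section OrderedGroup

variable {M : Type*} [AddCommGroup M] [LinearOrder M] [IsOrderedAddMonoid M] {n : ℕ}

section

variable {E : (Fin (n + 1) → M) → M → Prop} {b R : M}

theorem exists_isLUB_headLowerBounds [Nontrivial M] {S : OrdStruc M} (hDC : DefinablyComplete S)
    (hE : S.DefinableSetFamily E) (hne : ∀ r > 0, ∃ x, E x r)
    (hbdd : ∀ x r, E x r → ∀ i, |x i| < R) : ∃ b, IsLUB (headLowerBounds E) b := by
  obtain ⟨r, hr⟩ := exists_gt (0 : M)
  have hmem : -R ∈ headLowerBounds E :=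
    ⟨r, hr, fun v y h => by simpa using (abs_lt.1 (hbdd _ _ h 0)).1.le⟩
  have hbddAbove : BddAbove (headLowerBounds E) := by
    refine ⟨R, fun u ⟨r, hr, hu⟩ => ?_⟩
    obtain ⟨x, hx⟩ := hne r hr
    calc u ≤ x 0 := hu _ _ (by rwa [Fin.cons_self_tail])
      _ ≤ R := (le_abs_self _).trans (hbdd _ _ hx 0).le
  exact (hDC _ (definable_headLowerBounds hE) ⟨_, hmem⟩).1 hbddAbove

theorem tailFamily_nonempty (hmono : ∀ x, Monotone (E x))
    (hb : IsLUB (headLowerBounds E) b) {q : M} (hq : 0 < q) : ∃ y, tailFamily E b y q := by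
  obtain ⟨u, ⟨r, hr, hu⟩, hbu, -⟩ := hb.exists_between_sub_self hq
  have hnot : b + q ∉ headLowerBounds E := fun h => by
    simpa using (hb.1 h).trans_lt (lt_add_of_pos_right b hq)
  simp only [headLowerBounds, Set.mem_ofPred_eq, not_exists, not_and, not_forall, not_le] at hnot
  obtain ⟨v, y, hvy, hv⟩ := hnot (min r q) (lt_min hr hq)
  have hbv : b - q < v := hbu.trans_le (hu v y (hmono _ (min_le_left r q) hvy))
  refine ⟨y, min r q, v, lt_min hr hq, min_le_right r q, hvy, abs_sub_lt_iff.2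
    ⟨sub_lt_iff_lt_add'.2 hv, sub_lt_comm.1 hbv⟩⟩

end

theorem exists_isAdherentAtZero [Nontrivial M] {S : GrpStruc M}
    (hDC : DefinablyComplete S.toOrdStruc) {R : M} {E : (Fin n → M) → M → Prop}
    (hE : S.DefinableSetFamily E) (hmono : ∀ x, Monotone (E x)) (hne : ∀ r > 0, ∃ x, E x r)
    (hbdd : ∀ x r, E x r → ∀ i, |x i| < R) : ∃ x₀, IsAdherentAtZero E x₀ := by
  induction n with
  | zero => exact ⟨Fin.elim0, fun r hr _ _ => (hne r hr).imp fun _ hx => ⟨hx, nofun⟩⟩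
  | succ n ih =>
    obtain ⟨b, hb⟩ := exists_isLUB_headLowerBounds hDC hE hne hbdd
    obtain ⟨y₀, hy₀⟩ := ih (definable_tailFamily hE b) tailFamily_mono
      (fun _ => tailFamily_nonempty hmono hb) (fun _ _ => abs_lt_of_tailFamily hbdd)
    exact ⟨_, hy₀.cons_of_tailFamily hmono⟩

theorem abs_le_vnorm (x : Fin n → M) (i : Fin n) : |x i| ≤ vnorm x :=
  List.le_max_of_le' 0 (List.mem_ofFn.2 ⟨i, rfl⟩) le_rfl

theorem vnorm_lt {x : Fin n → M} {δ : M} (hδ : 0 < δ) (h : ∀ i, |x i| < δ) :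
    vnorm x < δ := by
  suffices ∀ l : List M, (∀ a ∈ l, a < δ) → l.foldr max 0 < δ from
    this _ fun a ha => by obtain ⟨i, rfl⟩ := List.mem_ofFn.1 ha; exact h i
  intro l
  induction l with
  | nil => exact fun _ => hδ
  | cons a l ih =>
    intro hl
    exact max_lt (hl a List.mem_cons_self) (ih fun b hb => hl b (List.mem_cons_of_mem a hb))

theorem exists_pos_add_lt [DenselyOrdered M] {ε : M} (hε : 0 < ε) : ∃ e > 0, e + e < ε := by
  obtain ⟨b, hb, hbε⟩ := exists_between hε
  obtain ⟨e, he, heb⟩ := exists_between (lt_min hb (sub_pos.2 hbε))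
  refine ⟨e, he, ?_⟩
  calc e + e < b + (ε - b) :=
        add_lt_add (heb.trans_le (min_le_left _ _)) (heb.trans_le (min_le_right _ _))
    _ = ε := add_sub_cancel b ε

theorem exists_pos_add_add_lt [DenselyOrdered M] {ε : M} (hε : 0 < ε) :
    ∃ e > 0, e + e + e < ε := by
  obtain ⟨a, ha, haε⟩ := exists_pos_add_lt hε
  obtain ⟨e, he, hea⟩ := exists_pos_add_lt ha
  exact ⟨e, he, (add_lt_add hea ((lt_add_of_pos_right e he).trans hea)).trans haε⟩

theorem IsClosed.mem_of_forall_exists_abs_sub_lt [TopologicalSpace M] [OrderTopology M]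
    [Nontrivial M] {C : Set (Fin n → M)} (hC : IsClosed C) {x : Fin n → M}
    (h : ∀ δ > 0, ∃ y ∈ C, ∀ i, |x i - y i| < δ) : x ∈ C := by
  have hbasis : (nhds x).HasBasis (fun Iδ : Set (Fin n) × M => Iδ.1.Finite ∧ 0 < Iδ.2)
      fun Iδ => Iδ.1.pi fun i => {b | |b - x i| < Iδ.2} := by
    rw [nhds_pi]
    refine Filter.hasBasis_pi_same_index (fun i => nhds_basis_abs_sub_lt (x i))
      fun I δ hI hδ => ?_
    rcases I.eq_empty_or_nonempty with rfl | hne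
    · obtain ⟨δ₀, hδ₀⟩ := exists_gt (0 : M)
      exact ⟨δ₀, hδ₀, by simp⟩
    · obtain ⟨j, hj, hmin⟩ := Set.exists_min_image I δ hI hne
      exact ⟨δ j, hδ j hj, fun i hi b hb => hb.trans_le (hmin i hi)⟩
  rw [← hC.closure_eq, mem_closure_iff_nhds_basis hbasis]
  rintro ⟨I, δ⟩ ⟨-, hδ⟩
  obtain ⟨y, hy, hxy⟩ := h δ hδ
  exact ⟨y, hy, fun i _ => by simpa [abs_sub_comm] using hxy i⟩

theorem exists_small_oscillation_near [DenselyOrdered M] {C : Set (Fin n → M)} {s : M}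
    {F : (Fin n → M) → M → M}
    (hequi : ∀ ε > 0, ∀ x ∈ C, ∃ δ > 0, ∀ t ∈ Set.Ioo 0 s, ∀ x' ∈ C,
      vnorm (x - x') < δ → |F x t - F x' t| < ε)
    (hptwise : ∀ ε > 0, ∀ x ∈ C, ∃ s' : M, 0 < s' ∧ s' ≤ s ∧
      ∀ t ∈ Set.Ioo 0 s', ∀ t' ∈ Set.Ioo 0 s', |F x t - F x t'| < ε)
    {x₀ : Fin n → M} (hx₀ : x₀ ∈ C) {ε : M} (hε : 0 < ε) :
    ∃ r > 0, ∃ δ > 0, ∀ x ∈ C, (∀ i, |x₀ i - x i| < δ) →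
      ∀ t ∈ Set.Ioo 0 r, ∀ t' ∈ Set.Ioo 0 r, |F x t - F x t'| < ε := by
  obtain ⟨e, he, he3⟩ := exists_pos_add_add_lt hε
  obtain ⟨r, hr, hrs, hconv⟩ := hptwise e he x₀ hx₀
  obtain ⟨δ, hδ, hcont⟩ := hequi e he x₀ hx₀
  refine ⟨r, hr, δ, hδ, fun x hx hclose t ht t' ht' => ?_⟩
  have hnear : vnorm (x₀ - x) < δ := vnorm_lt hδ hclose
  have hIoo {τ : M} (hτ : τ ∈ Set.Ioo 0 r) : τ ∈ Set.Ioo 0 s :=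
    ⟨hτ.1, hτ.2.trans_le hrs⟩
  calc |F x t - F x t'|
      ≤ |F x t - F x₀ t| + |F x₀ t - F x₀ t'| + |F x₀ t' - F x t'| :=
        (abs_sub_le _ (F x₀ t') _).trans (add_le_add_left (abs_sub_le _ (F x₀ t) _) _)
    _ < e + e + e := by
        rw [abs_sub_comm (F x t)]
        exact add_lt_add (add_lt_add (hcont t (hIoo ht) x hx hnear) (hconv t ht t' ht'))
          (hcont t' (hIoo ht') x hx hnear)
    _ < ε := he3

end OrderedGroup

theorem pointwise_convergent_equicontinuous_family_is_uniformly_convergent_general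
    {M : Type*} [AddCommGroup M] [LinearOrder M] [IsOrderedAddMonoid M] [DenselyOrdered M] [Nontrivial M]
    [TopologicalSpace M] [OrderTopology M]
    (S : GrpStruc M) (hDC : DefinablyComplete S.toOrdStruc)
    {m : ℕ} (C : Set (Fin m → M)) (hCcl : IsClosed C) (hCbdd : VBdd C)
    (s : M) (hs : 0 < s) (F : (Fin m → M) → M → M)
    (hFdef : S.toOrdStruc.DefinableFamilyOn C (Set.Ioo 0 s) F)
    (hequi : ∀ ε > (0 : M), ∀ x ∈ C, ∃ δ > (0 : M), ∀ t ∈ Set.Ioo (0 : M) s, ∀ x' ∈ C,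
      vnorm (x - x') < δ → |F x t - F x' t| < ε)
    (hptwise : ∀ ε > (0 : M), ∀ x ∈ C, ∃ s' : M, 0 < s' ∧ s' ≤ s ∧
      ∀ t ∈ Set.Ioo (0 : M) s', ∀ t' ∈ Set.Ioo (0 : M) s', |F x t - F x t'| < ε) :
    ∀ ε > (0 : M), ∃ s' : M, 0 < s' ∧ s' ≤ s ∧
      ∀ x ∈ C, ∀ t ∈ Set.Ioo (0 : M) s', ∀ t' ∈ Set.Ioo (0 : M) s',
        |F x t - F x t'| < ε := by
  intro ε hε
  by_contra! hosc
  obtain ⟨R, hR⟩ := hCbdd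
  have hne (r : M) (hr : 0 < r) : ∃ x, oscillationFamily C F s ε x r := by
    obtain ⟨x, hx, t, ht, t', ht', hge⟩ := hosc (min r s) (lt_min hr hs) (min_le_right r s)
    have hIoo {τ : M} (hτ : τ ∈ Set.Ioo 0 (min r s)) : τ < r ∧ τ ∈ Set.Ioo 0 s :=
      ⟨hτ.2.trans_le (min_le_left r s), hτ.1, hτ.2.trans_le (min_le_right r s)⟩
    exact ⟨x, t, t', (hIoo ht).1, (hIoo ht').1, hx, (hIoo ht).2, (hIoo ht').2, hge⟩
  obtain ⟨x₀, hx₀⟩ := exists_isAdherentAtZero hDC (definable_oscillationFamily hFdef ε)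
    (oscillationFamily_mono C F s ε) hne
    fun x _ ⟨_, _, _, _, hx, _⟩ i => (abs_le_vnorm x i).trans_lt (hR x hx)
  have hx₀C : x₀ ∈ C := hCcl.mem_of_forall_exists_abs_sub_lt fun δ hδ => by
    obtain ⟨x, ⟨_, _, _, _, hx, _⟩, hclose⟩ := hx₀ s hs δ hδ
    exact ⟨x, hx, hclose⟩
  obtain ⟨r, hr, δ, hδ, hsmall⟩ := exists_small_oscillation_near hequi hptwise hx₀C hε
  obtain ⟨x, ⟨t, t', htr, ht'r, hx, ht, ht', hge⟩, hclose⟩ := hx₀ r hr δ hδ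
  exact hge.not_gt (hsmall x hx hclose t ⟨ht.1, htr⟩ t' ⟨ht'.1, ht'r⟩)

/-- Theorem 3.8 (definable Arzelà–Ascoli): a pointwise convergent definable family of
equi-continuous functions on a definable closed bounded set is uniformly convergent. -/
theorem pointwise_convergent_equicontinuous_family_is_uniformly_convergent
    {M : Type*} [AddCommGroup M] [LinearOrder M] [IsOrderedAddMonoid M] [DenselyOrdered M] [Nontrivial M]
    [TopologicalSpace M] [OrderTopology M]
    (S : GrpStruc M) (hDC : DefinablyComplete S.toOrdStruc)
    (hLO : LocallyOMinimal S.toOrdStruc)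
    {m : ℕ} (C : Set (Fin m → M)) (hCdef : S.defin C) (hCcl : IsClosed C) (hCbdd : VBdd C)
    (s : M) (hs : 0 < s) (F : (Fin m → M) → M → M)
    (hFdef : S.toOrdStruc.DefinableFamilyOn C (Set.Ioo 0 s) F)
    (hequi : ∀ ε > (0 : M), ∀ x ∈ C, ∃ δ > (0 : M), ∀ t ∈ Set.Ioo (0 : M) s, ∀ x' ∈ C,
      vnorm (x - x') < δ → |F x t - F x' t| < ε)
    (hptwise : ∀ ε > (0 : M), ∀ x ∈ C, ∃ s' : M, 0 < s' ∧ s' ≤ s ∧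
      ∀ t ∈ Set.Ioo (0 : M) s', ∀ t' ∈ Set.Ioo (0 : M) s', |F x t - F x t'| < ε) :
    ∀ ε > (0 : M), ∃ s' : M, 0 < s' ∧ s' ≤ s ∧
      ∀ x ∈ C, ∀ t ∈ Set.Ioo (0 : M) s', ∀ t' ∈ Set.Ioo (0 : M) s',
        |F x t - F x t'| < ε :=
  pointwise_convergent_equicontinuous_family_is_uniformly_convergent_general S hDC C hCcl hCbdd s hs
    F hFdef hequi hptwise
end

section
/- Let C be a definable, closed and bounded subset of M^m. Then every definable continuous function f : C → M is uniformly continuous, i.e. ∀ε>0 ∃δ>0 ∀x,x'∈C (|x−x'|<δ ⇒ |f(x)−f(x')|<ε). -/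
open Set

/-!
If uniform continuity fails for some `ε`, then for every `δ > 0` there are `x, x' ∈ C` with
`|x - x'| < δ` and `|f x - f x'| ≥ ε`. These triples `(x, x', δ)` form a definable family of
nonempty bounded sets, increasing in `δ`. Definable completeness stands in for compactness: for
one coordinate at a time, the supremum over `δ` of the infimum of that coordinate on the fibre
exists, and cutting the family down near it forces the coordinate to converge as `δ → 0⁺`. This
yields `x_δ, x'_δ` converging to a common limit `a`, which lies in `C` because `C` is closed;
continuity of `f` at `a` then contradicts `|f x_δ - f x'_δ| ≥ ε`.
-/

@[simp] theorem pFst_append {M : Type*} {m n : ℕ} (x : Fin m → M) (y : Fin n → M) :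
    pFst (Fin.append x y) = x :=
  funext (Fin.append_left x y)

@[simp] theorem pSnd_append {M : Type*} {m n : ℕ} (x : Fin m → M) (y : Fin n → M) :
    pSnd (Fin.append x y) = y :=
  funext (Fin.append_right x y)

namespace OrdStruc

section

variable {M : Type*} [LinearOrder M] (S : OrdStruc M) {n k : ℕ}

theorem defin_univ : S.defin (univ : Set (Fin n → M)) := by
  simpa using S.defin_compl (S.defin_empty (n := n))

theorem defin_inter {A B : Set (Fin n → M)} (hA : S.defin A) (hB : S.defin B) :
    S.defin (A ∩ B) := by
  simpa [compl_union] using S.defin_compl (S.defin_union (S.defin_compl hA) (S.defin_compl hB))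

theorem defin_iInter {A : Fin k → Set (Fin n → M)} (hA : ∀ i, S.defin (A i)) :
    S.defin (⋂ i, A i) := by
  induction k with
  | zero => simpa using S.defin_univ
  | succ k ih =>
    have hsplit : ⋂ i, A i = A 0 ∩ ⋂ i : Fin k, A i.succ := by
      ext; simp [Fin.forall_fin_succ]
    rw [hsplit]
    exact S.defin_inter (hA 0) (ih fun i => hA i.succ)

theorem defin_setOf_imp {P Q : (Fin n → M) → Prop} (hP : S.defin {z | P z})
    (hQ : S.defin {z | Q z}) : S.defin {z | P z → Q z} := by
  convert S.defin_union (S.defin_compl hP) hQ using 1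
  ext z
  simp [imp_iff_not_or]

theorem defin_pFst_mem {j : ℕ} {A : Set (Fin n → M)} (hA : S.defin A) :
    S.defin {z : Fin (n + j) → M | pFst z ∈ A} := by
  induction j with
  | zero => exact hA
  | succ j ih => exact S.defin_cylinder ih

theorem defin_preimage_of_injective {A : Set (Fin n → M)} (hA : S.defin A) {φ : Fin n → Fin k}
    (hφ : Function.Injective φ) : S.defin {z : Fin k → M | z ∘ φ ∈ A} := by
  classical
  -- `φ = σ ∘ Fin.castAdd j` for a permutation `σ`, so `{z | z ∘ φ ∈ A}` is a permuted cylinder.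
  obtain ⟨j, rfl⟩ : ∃ j, k = n + j :=
    Nat.exists_eq_add_of_le (by simpa using Fintype.card_le_of_injective φ hφ)
  let e : range (Fin.castAdd j) ≃ range φ :=
    (Equiv.ofInjective _ (Fin.castAdd_injective n j)).symm.trans (Equiv.ofInjective φ hφ)
  have he : ∀ i, e.extendSubtype (Fin.castAdd j i) = φ i := fun i => by
    rw [Equiv.extendSubtype_apply_of_mem e _ ⟨i, rfl⟩]
    simp [e]
  convert S.defin_perm e.extendSubtype (S.defin_pFst_mem (j := j) hA) using 1
  ext z
  change z ∘ φ ∈ A ↔ (fun i => z (e.extendSubtype (Fin.castAdd j i))) ∈ A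
  simp only [he]
  rfl

theorem defin_exists_snoc {B : Set (Fin (n + 1) → M)} (hB : S.defin B) :
    S.defin {x | ∃ t, Fin.snoc x t ∈ B} := by
  convert S.defin_proj hB using 1
  ext x
  constructor
  · rintro ⟨t, ht⟩
    exact ⟨_, ht, Fin.init_snoc _ _⟩
  · rintro ⟨u, hu, rfl⟩
    exact ⟨u (Fin.last n), by rwa [Fin.snoc_init_self]⟩

theorem defin_exists_append {B : Set (Fin (n + k) → M)} (hB : S.defin B) :
    S.defin {x | ∃ y : Fin k → M, Fin.append x y ∈ B} := by
  induction k with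
  | zero =>
    have hB' : {x : Fin n → M | ∃ y : Fin 0 → M, Fin.append x y ∈ B} = B := by
      ext x
      simp [Fin.append_right_nil x _ rfl]
    rwa [hB']
  | succ k ih =>
    convert ih (S.defin_exists_snoc hB) using 1
    ext x
    constructor
    · rintro ⟨y, hy⟩
      exact ⟨Fin.init y, y (Fin.last k), by rwa [← Fin.append_snoc, Fin.snoc_init_self]⟩
    · rintro ⟨y, t, hyt⟩
      exact ⟨Fin.snoc y t, by rwa [Fin.append_snoc]⟩

theorem defin_forall_append {B : Set (Fin (n + k) → M)} (hB : S.defin B) :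
    S.defin {x | ∀ y : Fin k → M, Fin.append x y ∈ B} := by
  convert S.defin_compl (S.defin_exists_append (S.defin_compl hB)) using 1
  ext x
  simp

def DefinableFun (g : (Fin n → M) → M) : Prop :=
  S.defin {z : Fin (n + 1) → M | z (Fin.last n) = g (Fin.init z)}

variable {S}

theorem definableFun_apply (i : Fin n) : S.DefinableFun (fun z => z i) := by
  have hinj : Function.Injective ![Fin.last n, Fin.castSucc i] := by
    intro a b h
    fin_cases a <;> fin_cases b <;> simp_all [(Fin.castSucc_ne_last i).symm, Fin.castSucc_ne_last]
  unfold DefinableFun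
  convert S.defin_preimage_of_injective S.defin_eq hinj using 1
  ext z
  simp [Fin.init]

theorem definableFun_const (c : M) : S.DefinableFun (fun _ : Fin n → M => c) := by
  unfold DefinableFun
  convert S.defin_preimage_of_injective (S.defin_const c)
    (Function.injective_of_subsingleton ![Fin.last n]) using 1
  ext z
  simp

theorem defin_preimage_definableFun {g : Fin k → (Fin n → M) → M}
    (hg : ∀ i, S.DefinableFun (g i)) {A : Set (Fin k → M)} (hA : S.defin A) :
    S.defin {z | (fun i => g i z) ∈ A} := by
  have hgraph : ∀ i, S.defin {u : Fin (n + k) → M | pSnd u i = g i (pFst u)} := fun i => by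
    have hinj : Function.Injective (Fin.snoc (Fin.castAdd k) (Fin.natAdd n i)) := by
      refine Fin.snoc_injective_of_injective (Fin.castAdd_injective n k) ?_
      rintro ⟨j, hj⟩
      have := congrArg Fin.val hj
      simp at this
      omega
    convert S.defin_preimage_of_injective (hg i) hinj using 1
    ext u
    simp only [mem_ofPred_eq, Fin.comp_snoc, Fin.init_snoc, Fin.snoc_last]
    rfl
  have hA' : S.defin {u : Fin (n + k) → M | pSnd u ∈ A} :=
    S.defin_preimage_of_injective hA (Fin.natAdd_injective _ _)
  -- `{z | g z ∈ A}` is the projection of `{(z, y) | y ∈ A ∧ ∀ i, y i = g i z}`.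
  convert S.defin_exists_append (S.defin_inter hA' (S.defin_iInter hgraph)) using 1
  ext z
  constructor
  · intro hz
    exact ⟨fun i => g i z, by simpa using hz⟩
  · rintro ⟨y, hyA, hy⟩
    obtain rfl : y = fun i => g i z := funext fun i => by simpa using mem_iInter.1 hy i
    simpa using hyA

theorem defin_preimage {A : Set (Fin n → M)} (hA : S.defin A) (φ : Fin n → Fin k) :
    S.defin {z : Fin k → M | z ∘ φ ∈ A} :=
  defin_preimage_definableFun (fun i => definableFun_apply (φ i)) hA

theorem DefinableFun.comp_init {g : (Fin n → M) → M} (hg : S.DefinableFun g) :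
    S.DefinableFun (fun z : Fin (n + 1) → M => g (Fin.init z)) := by
  unfold DefinableFun at *
  convert defin_preimage hg (Fin.snoc (Fin.castSucc ∘ Fin.castSucc) (Fin.last (n + 1))) using 1
  ext z
  simp only [mem_ofPred_eq, Fin.comp_snoc, Fin.init_snoc, Fin.snoc_last]
  rfl

theorem DefinableFun.comp {g : (Fin k → M) → M} {h : Fin k → (Fin n → M) → M}
    (hg : S.DefinableFun g) (hh : ∀ i, S.DefinableFun (h i)) :
    S.DefinableFun (fun z => g (fun i => h i z)) := by
  have hfam : ∀ j : Fin (k + 1), S.DefinableFun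
      (Fin.lastCases (fun w => w (Fin.last n)) (fun i w => h i (Fin.init w)) j) :=
    Fin.lastCases (by simpa using definableFun_apply _) fun i => by
      simpa using (hh i).comp_init
  unfold DefinableFun at *
  convert defin_preimage_definableFun hfam hg using 1
  ext z
  simp [Fin.init_def]

theorem DefinableFun.defin_lt {g h : (Fin n → M) → M} (hg : S.DefinableFun g)
    (hh : S.DefinableFun h) : S.defin {z | g z < h z} := by
  convert defin_preimage_definableFun (g := ![g, h]) (Fin.forall_fin_two.2 ⟨hg, hh⟩) S.defin_lt
    using 1
  ext z
  simp

theorem DefinableFun.defin_eq {g h : (Fin n → M) → M} (hg : S.DefinableFun g)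
    (hh : S.DefinableFun h) : S.defin {z | g z = h z} := by
  convert defin_preimage_definableFun (g := ![g, h]) (Fin.forall_fin_two.2 ⟨hg, hh⟩) S.defin_eq
    using 1
  ext z
  simp

theorem DefinableFun.defin_le {g h : (Fin n → M) → M} (hg : S.DefinableFun g)
    (hh : S.DefinableFun h) : S.defin {z | g z ≤ h z} := by
  convert S.defin_compl (hh.defin_lt hg) using 1
  ext z
  simp

theorem DefinableFunOn.indicator [Zero M] {C : Set (Fin n → M)} {f : (Fin n → M) → M}
    (hf : S.DefinableFunOn C f) (hC : S.defin C) : S.DefinableFun (C.indicator f) := by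
  unfold DefinableFun
  convert S.defin_union hf (S.defin_inter (S.defin_compl (S.defin_cylinder hC))
    (definableFun_const (S := S) (n := n) 0)) using 1
  ext z
  by_cases h : Fin.init z ∈ C <;> simp [h]

theorem defin1_exists_forall_le [Zero M] {G : Set (Fin (n + 1) → M)} (hG : S.defin G)
    (k : Fin n) :
    S.defin1 {t | ∃ δ > 0, ∀ x, Fin.snoc x δ ∈ G → t ≤ x k} := by
  -- the coordinates of `u` are `(t, δ, x)`
  have hB : S.defin {u : Fin (1 + 1 + n) → M |
      Fin.snoc (pSnd u) (u (Fin.castAdd n (Fin.last 1))) ∈ G →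
        u (Fin.castAdd n (Fin.castSucc 0)) ≤ pSnd u k} := by
    refine S.defin_setOf_imp ?_ ((definableFun_apply _).defin_le (definableFun_apply _))
    convert S.defin_preimage hG (Fin.snoc (Fin.natAdd (1 + 1)) (Fin.castAdd n (Fin.last 1)))
      using 1
    ext u
    simp only [mem_ofPred_eq, Fin.comp_snoc]
    rfl
  have hB' : S.defin {v : Fin (1 + 1) → M | 0 < v (Fin.last 1) ∧
      ∀ x : Fin n → M, Fin.snoc x (v (Fin.last 1)) ∈ G → v (Fin.castSucc 0) ≤ x k} := by
    convert S.defin_inter ((definableFun_const 0).defin_lt (definableFun_apply (Fin.last 1)))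
      (S.defin_forall_append hB) using 1
    ext v
    simp only [mem_ofPred_eq, mem_inter_iff, pSnd_append, Fin.append_left]
  unfold defin1
  convert S.defin_exists_snoc hB' using 1
  ext z
  simp only [mem_ofPred_eq, Fin.snoc_last, Fin.snoc_castSucc, gt_iff_lt]

end

section

variable {M : Type*} [AddCommGroup M] [LinearOrder M] [IsOrderedAddMonoid M] {S : GrpStruc M}
  {n : ℕ}

theorem DefinableFun.sub {g h : (Fin n → M) → M} (hg : S.DefinableFun g)
    (hh : S.DefinableFun h) : S.DefinableFun (fun z => g z - h z) := by
  have hfam : ∀ i : Fin 3, S.DefinableFun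
      (![fun w => w (Fin.last n), fun w => h (Fin.init w), fun w => g (Fin.init w)] i) := by
    intro i
    fin_cases i
    exacts [definableFun_apply _, hh.comp_init, hg.comp_init]
  unfold DefinableFun
  convert defin_preimage_definableFun hfam S.defin_add using 1
  ext w
  simp [eq_sub_iff_add_eq]

theorem definableFun_abs : S.DefinableFun (fun v : Fin 1 → M => |v 0|) := by
  have hx := definableFun_apply (S := S.toOrdStruc) (Fin.castSucc (0 : Fin 1))
  have hy := definableFun_apply (S := S.toOrdStruc) (Fin.last 1)
  have h0 := definableFun_const (S := S.toOrdStruc) (n := 2) 0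
  -- `y = |x| ↔ (y = x ∨ y = 0 - x) ∧ 0 ≤ y`
  unfold DefinableFun
  convert S.defin_inter (S.defin_union (hy.defin_eq hx) (hy.defin_eq (h0.sub hx)))
    (h0.defin_le hy) using 1
  ext w
  simp only [mem_ofPred_eq, mem_inter_iff, mem_union, zero_sub]
  constructor
  · intro h
    rw [h]
    exact ⟨abs_choice _, abs_nonneg _⟩
  · rintro ⟨h | h, hw⟩
    · rw [h] at hw ⊢
      exact (abs_of_nonneg hw).symm
    · rw [h] at hw ⊢
      exact (abs_of_nonpos (neg_nonneg.1 hw)).symm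

theorem DefinableFun.abs {g : (Fin n → M) → M} (hg : S.DefinableFun g) :
    S.DefinableFun (fun z => |g z|) :=
  definableFun_abs.comp fun _ => hg

end

end OrdStruc

open Filter Topology

section DefinableFamilies

variable {M : Type*} [AddCommGroup M] [LinearOrder M] {n : ℕ}

structure IsDefinableIncreasingFamily (S : OrdStruc M) (G : Set (Fin (n + 1) → M)) : Prop where
  defin : S.defin G
  nonempty : ∀ δ > 0, ∃ x, Fin.snoc x δ ∈ G
  mono : ∀ ⦃δ δ' : M⦄ ⦃x : Fin n → M⦄, 0 < δ → δ ≤ δ' → Fin.snoc x δ ∈ G →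
    Fin.snoc x δ' ∈ G

variable [TopologicalSpace M]

def FibreCoordTendsto (G : Set (Fin (n + 1) → M)) (i : Fin n) (c : M) : Prop :=
  ∀ η > 0, ∀ᶠ δ in 𝓝[>] 0, ∀ x, Fin.snoc x δ ∈ G → |x i - c| < η

theorem FibreCoordTendsto.mono {G G' : Set (Fin (n + 1) → M)} {i : Fin n} {c : M}
    (h : FibreCoordTendsto G i c) (hG' : G' ⊆ G) : FibreCoordTendsto G' i c :=
  fun η hη => (h η hη).mono fun _ hδ x hx => hδ x (hG' hx)

variable [IsOrderedAddMonoid M] [OrderTopology M] [Nontrivial M] {S : GrpStruc M}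
  {G : Set (Fin (n + 1) → M)} {r : M}

theorem IsDefinableIncreasingFamily.exists_fibreCoordTendsto
    (hDC : DefinablyComplete S.toOrdStruc) (hG : IsDefinableIncreasingFamily S.toOrdStruc G)
    (hr : ∀ δ > 0, ∀ x, Fin.snoc x δ ∈ G → ∀ i, |x i| ≤ r) (k : Fin n) :
    ∃ G' ⊆ G, IsDefinableIncreasingFamily S.toOrdStruc G' ∧
      ∃ c, FibreCoordTendsto G' k c := by
  set L := {t : M | ∃ δ > 0, ∀ x, Fin.snoc x δ ∈ G → t ≤ x k}
  have hLne : L.Nonempty := by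
    obtain ⟨δ, hδ⟩ := exists_gt (0 : M)
    exact ⟨-r, δ, hδ, fun x hx => neg_le_of_abs_le (hr δ hδ x hx k)⟩
  have hLbdd : BddAbove L := by
    refine ⟨r, fun t ⟨δ, hδ, ht⟩ => ?_⟩
    obtain ⟨x, hx⟩ := hG.nonempty δ hδ
    exact (ht x hx).trans (le_of_abs_le (hr δ hδ x hx k))
  obtain ⟨c, hc⟩ := (hDC L (OrdStruc.defin1_exists_forall_le hG.defin k) hLne).1 hLbdd
  -- `c = lim_{δ → 0⁺} inf {x k | x ∈ G_δ}`; keeping only `x k ≤ c + δ` squeezes `x k` to `c`.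
  set G' := G ∩ {w | Fin.init w k - w (Fin.last n) ≤ c}
  have hmem : ∀ x δ, Fin.snoc x δ ∈ G' ↔ Fin.snoc x δ ∈ G ∧ x k - δ ≤ c := by
    simp [G']
  refine ⟨G', inter_subset_left,
    ⟨?_, fun δ hδ => ?_, fun δ δ' x hδ hδδ' hx => ?_⟩, c, ?_⟩
  · exact S.defin_inter hG.defin
      (((OrdStruc.definableFun_apply _).sub (OrdStruc.definableFun_apply _)).defin_le
        (OrdStruc.definableFun_const c))
  · by_contra! hempty
    have hcδ : c + δ ∈ L := ⟨δ, hδ, fun x hx =>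
      (lt_sub_iff_add_lt.1 (not_le.1 fun h => hempty x ((hmem x δ).2 ⟨hx, h⟩))).le⟩
    exact (lt_add_of_pos_right c hδ).not_ge (hc.1 hcδ)
  · rw [hmem] at hx ⊢
    exact ⟨hG.mono hδ hδδ' hx.1, (sub_le_sub_left hδδ' _).trans hx.2⟩
  · intro η hη
    obtain ⟨t, ⟨δ₂, hδ₂, ht⟩, hct, -⟩ := hc.exists_between (sub_lt_self c hη)
    filter_upwards [Ioo_mem_nhdsGT (lt_min hδ₂ hη)] with δ hδ x hx
    rw [hmem] at hx
    have hlow : c - η < x k :=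
      hct.trans_le (ht x (hG.mono hδ.1 (hδ.2.le.trans (min_le_left _ _)) hx.1))
    have hup : x k < c + η := calc
      x k ≤ c + δ := sub_le_iff_le_add.1 hx.2
      _ < c + η := (add_lt_add_iff_left c).2 (hδ.2.trans_le (min_le_right _ _))
    exact abs_sub_lt_iff.2 ⟨sub_lt_iff_lt_add'.2 hup, sub_lt_comm.1 hlow⟩

theorem IsDefinableIncreasingFamily.exists_subfamily_fibreCoordTendsto
    (hDC : DefinablyComplete S.toOrdStruc) (hG : IsDefinableIncreasingFamily S.toOrdStruc G)
    (hr : ∀ δ > 0, ∀ x, Fin.snoc x δ ∈ G → ∀ i, |x i| ≤ r) (s : Finset (Fin n)) :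
    ∃ G' ⊆ G, IsDefinableIncreasingFamily S.toOrdStruc G' ∧
      ∃ a : Fin n → M, ∀ i ∈ s, FibreCoordTendsto G' i (a i) := by
  classical
  induction s using Finset.induction_on with
  | empty => exact ⟨G, subset_rfl, hG, 0, by simp⟩
  | insert i s _ ih =>
    obtain ⟨G', hG'G, hG', a, ha⟩ := ih
    obtain ⟨G'', hG''G', hG'', c, hc⟩ :=
      hG'.exists_fibreCoordTendsto hDC (fun δ hδ x hx => hr δ hδ x (hG'G hx)) i
    refine ⟨G'', hG''G'.trans hG'G, hG'', Function.update a i c, fun j hj => ?_⟩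
    rcases eq_or_ne j i with rfl | hji
    · simpa using hc
    · rw [Function.update_of_ne hji]
      exact (ha j ((Finset.mem_insert.1 hj).resolve_left hji)).mono hG''G'

theorem IsDefinableIncreasingFamily.exists_tendsto
    (hDC : DefinablyComplete S.toOrdStruc) (hG : IsDefinableIncreasingFamily S.toOrdStruc G)
    (hr : ∀ δ > 0, ∀ x, Fin.snoc x δ ∈ G → ∀ i, |x i| ≤ r) :
    ∃ (γ : M → Fin n → M) (a : Fin n → M),
      (∀ δ > 0, Fin.snoc (γ δ) δ ∈ G) ∧ Tendsto γ (𝓝[>] 0) (𝓝 a) := by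
  obtain ⟨G', hG'G, hG', a, ha⟩ := hG.exists_subfamily_fibreCoordTendsto hDC hr Finset.univ
  choose! γ hγ using hG'.nonempty
  refine ⟨γ, a, fun δ hδ => hG'G (hγ δ hδ), tendsto_pi_nhds.2 fun i => ?_⟩
  refine LinearOrderedAddCommGroup.tendsto_nhds.2 fun η hη => ?_
  filter_upwards [ha i (Finset.mem_univ i) η hη, self_mem_nhdsWithin] with δ hδ hδpos
  exact hδ _ (hγ δ hδpos)

end DefinableFamilies

theorem ContinuousOn.tendsto_sub_of_tendsto_sub {α X Y : Type*} [TopologicalSpace X]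
    [AddCommGroup X] [IsTopologicalAddGroup X] [TopologicalSpace Y] [AddGroup Y]
    [IsTopologicalAddGroup Y] {C : Set X} {f : X → Y} (hf : ContinuousOn f C) (hC : IsClosed C)
    {l : Filter α} [l.NeBot] {u v : α → X} {a : X} (hu : Tendsto u l (𝓝 a))
    (huv : Tendsto (fun t => u t - v t) l (𝓝 0)) (huC : ∀ᶠ t in l, u t ∈ C)
    (hvC : ∀ᶠ t in l, v t ∈ C) : Tendsto (fun t => f (u t) - f (v t)) l (𝓝 0) := by
  have ha : a ∈ C := hC.mem_of_tendsto hu huC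
  have hv : Tendsto v l (𝓝 a) := by simpa using hu.sub huv
  have hfu := (hf a ha).tendsto.comp (tendsto_nhdsWithin_iff.2 ⟨hu, huC⟩)
  have hfv := (hf a ha).tendsto.comp (tendsto_nhdsWithin_iff.2 ⟨hv, hvC⟩)
  simpa using hfu.sub hfv

section UniformContinuity

variable {M : Type*} [AddCommGroup M] [LinearOrder M] {m : ℕ}

def nonUniformPairs (C : Set (Fin m → M)) (f : (Fin m → M) → M) (ε : M) :
    Set (Fin (m + m + 1) → M) :=
  {z | pFst (Fin.init z) ∈ C ∧ pSnd (Fin.init z) ∈ C ∧ 0 < z (Fin.last _) ∧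
    (∀ i, |pFst (Fin.init z) i - pSnd (Fin.init z) i| < z (Fin.last _)) ∧
    ε ≤ |f (pFst (Fin.init z)) - f (pSnd (Fin.init z))|}

variable {C : Set (Fin m → M)} {f : (Fin m → M) → M} {ε : M}

@[simp] theorem snoc_mem_nonUniformPairs {w : Fin (m + m) → M} {δ : M} :
    Fin.snoc w δ ∈ nonUniformPairs C f ε ↔ pFst w ∈ C ∧ pSnd w ∈ C ∧ 0 < δ ∧
      (∀ i, |pFst w i - pSnd w i| < δ) ∧ ε ≤ |f (pFst w) - f (pSnd w)| := by
  simp [nonUniformPairs]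

variable [IsOrderedAddMonoid M]

theorem abs_apply_le_vnorm (x : Fin m → M) (i : Fin m) : |x i| ≤ vnorm x :=
  List.le_max_of_le' 0 (List.mem_ofFn.2 ⟨i, rfl⟩) le_rfl

theorem abs_le_of_snoc_mem_nonUniformPairs {r : M} (hr : ∀ x ∈ C, vnorm x < r)
    {w : Fin (m + m) → M} {δ : M} (hw : Fin.snoc w δ ∈ nonUniformPairs C f ε)
    (i : Fin (m + m)) :
    |w i| ≤ r := by
  rw [snoc_mem_nonUniformPairs] at hw
  induction i using Fin.addCases with
  | left i => exact (abs_apply_le_vnorm (pFst w) i).trans (hr _ hw.1).le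
  | right i => exact (abs_apply_le_vnorm (pSnd w) i).trans (hr _ hw.2.1).le

theorem defin_nonUniformPairs {S : GrpStruc M} (hC : S.defin C)
    (hf : S.toOrdStruc.DefinableFunOn C f) (ε : M) : S.defin (nonUniformPairs C f ε) := by
  have hx : ∀ i, S.DefinableFun fun z : Fin (m + m + 1) → M => pFst (Fin.init z) i :=
    fun i => OrdStruc.definableFun_apply _
  have hx' : ∀ i, S.DefinableFun fun z : Fin (m + m + 1) → M => pSnd (Fin.init z) i :=
    fun i => OrdStruc.definableFun_apply _
  have hδ := OrdStruc.definableFun_apply (S := S.toOrdStruc) (Fin.last (m + m))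
  -- `C.indicator f` is definable everywhere and agrees with `f` on `C`.
  have hf' := hf.indicator hC
  have hxC : S.defin {z : Fin (m + m + 1) → M | pFst (Fin.init z) ∈ C} :=
    S.defin_preimage hC (Fin.castSucc ∘ Fin.castAdd m)
  have hx'C : S.defin {z : Fin (m + m + 1) → M | pSnd (Fin.init z) ∈ C} :=
    S.defin_preimage hC (Fin.castSucc ∘ Fin.natAdd m)
  have hpos := (OrdStruc.definableFun_const 0).defin_lt hδ
  have hclose := S.defin_iInter fun i => ((hx i).sub (hx' i)).abs.defin_lt hδ
  have hfar := (OrdStruc.definableFun_const ε).defin_le ((hf'.comp hx).sub (hf'.comp hx')).abs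
  convert S.defin_inter hxC (S.defin_inter hx'C (S.defin_inter hpos
    (S.defin_inter hclose hfar))) using 1
  ext z
  simp only [nonUniformPairs, mem_ofPred_eq, mem_inter_iff, mem_iInter]
  refine and_congr_right fun hxz => and_congr_right fun hx'z => ?_
  rw [indicator_of_mem hxz, indicator_of_mem hx'z]

theorem isDefinableIncreasingFamily_nonUniformPairs {S : GrpStruc M} (hC : S.defin C)
    (hf : S.toOrdStruc.DefinableFunOn C f)
    (hbad : ∀ δ > 0, ∃ x ∈ C, ∃ x' ∈ C, vnorm (x - x') < δ ∧ ε ≤ |f x - f x'|) :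
    IsDefinableIncreasingFamily S.toOrdStruc (nonUniformPairs C f ε) where
  defin := defin_nonUniformPairs hC hf ε
  nonempty δ hδ := by
    obtain ⟨x, hx, x', hx', hxx', hfar⟩ := hbad δ hδ
    refine ⟨Fin.append x x', ?_⟩
    simpa using ⟨hx, hx', hδ, fun i => (abs_apply_le_vnorm (x - x') i).trans_lt hxx', hfar⟩
  mono δ δ' w hδ hδδ' hw := by
    rw [snoc_mem_nonUniformPairs] at hw ⊢
    obtain ⟨hx, hx', -, hclose, hfar⟩ := hw
    exact ⟨hx, hx', hδ.trans_le hδδ', fun i => (hclose i).trans_le hδδ', hfar⟩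

end UniformContinuity

theorem tendsto_nhdsGT_zero_of_abs_lt {M ι : Type*} [AddCommGroup M] [LinearOrder M]
    [IsOrderedAddMonoid M] [TopologicalSpace M] [OrderTopology M] {w : M → ι → M}
    (h : ∀ δ > 0, ∀ i, |w δ i| < δ) : Tendsto w (𝓝[>] 0) (𝓝 0) :=
  tendsto_pi_nhds.2 fun i => LinearOrderedAddCommGroup.tendsto_nhds.2 fun η hη => by
    filter_upwards [Ioo_mem_nhdsGT hη] with δ hδ
    simpa using (h δ hδ.1 i).trans hδ.2

theorem definable_continuous_on_closed_bounded_is_uniformly_continuous_general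
    {M : Type*} [AddCommGroup M] [LinearOrder M] [IsOrderedAddMonoid M] [DenselyOrdered M]
    [TopologicalSpace M] [OrderTopology M]
    (S : GrpStruc M) (hDC : DefinablyComplete S.toOrdStruc)
    {m : ℕ} (C : Set (Fin m → M)) (hCdef : S.defin C) (hCcl : IsClosed C) (hCbdd : VBdd C)
    (f : (Fin m → M) → M) (hfdef : S.toOrdStruc.DefinableFunOn C f)
    (hfcont : ContinuousOn f C) :
    ∀ ε > (0 : M), ∃ δ > (0 : M), ∀ x ∈ C, ∀ x' ∈ C,
      vnorm (x - x') < δ → |f x - f x'| < ε := by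
  intro ε hε
  by_contra! hbad
  have : Nontrivial M := ⟨⟨0, ε, hε.ne⟩⟩
  obtain ⟨r, hr⟩ := hCbdd
  obtain ⟨γ, a, hγ, hlim⟩ :=
    (isDefinableIncreasingFamily_nonUniformPairs hCdef hfdef hbad).exists_tendsto hDC
      fun δ _ w hw => abs_le_of_snoc_mem_nonUniformPairs hr hw
  simp only [snoc_mem_nonUniformPairs] at hγ
  have hpFst : Continuous (pFst : (Fin (m + m) → M) → Fin m → M) :=
    continuous_pi fun i => continuous_apply _
  have hclose := tendsto_nhdsGT_zero_of_abs_lt fun δ hδ => (hγ δ hδ).2.2.2.1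
  have hsub := hfcont.tendsto_sub_of_tendsto_sub hCcl ((hpFst.tendsto a).comp hlim) hclose
    (eventually_nhdsWithin_of_forall fun δ hδ => (hγ δ hδ).1)
    (eventually_nhdsWithin_of_forall fun δ hδ => (hγ δ hδ).2.1)
  have hfar := ge_of_tendsto hsub.abs
    (eventually_nhdsWithin_of_forall fun δ hδ => (hγ δ hδ).2.2.2.2)
  exact hε.not_ge (by simpa using hfar)

/-- Corollary 3.4: a definable continuous function on a definable, closed and bounded
set is uniformly continuous. -/
theorem definable_continuous_on_closed_bounded_is_uniformly_continuous
    {M : Type*} [AddCommGroup M] [LinearOrder M] [IsOrderedAddMonoid M] [DenselyOrdered M] [Nontrivial M]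
    [TopologicalSpace M] [OrderTopology M]
    (S : GrpStruc M) (hDC : DefinablyComplete S.toOrdStruc)
    (hLO : LocallyOMinimal S.toOrdStruc)
    {m : ℕ} (C : Set (Fin m → M)) (hCdef : S.defin C) (hCcl : IsClosed C) (hCbdd : VBdd C)
    (f : (Fin m → M) → M) (hfdef : S.toOrdStruc.DefinableFunOn C f)
    (hfcont : ContinuousOn f C) :
    ∀ ε > (0 : M), ∃ δ > (0 : M), ∀ x ∈ C, ∀ x' ∈ C,
      vnorm (x - x') < δ → |f x - f x'| < ε :=
  definable_continuous_on_closed_bounded_is_uniformly_continuous_general S hDC C hCdef hCcl hCbdd f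
    hfdef hfcont
end
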